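/- Let G be a connected simple graph and {a,b} an edge of G that is a bridge, i.e., the graph G − {a,b} obtained by removing the edge is disconnected. Then the effective resistance of this edge equals 1: r_G(a,b) = M[a,a] − 2·M[a,b] + M[b,b] = 1 for any Moore–Penrose pseudoinverse M of L_G. -/

import Mathlib

/-!
Let `x` be the indicator vector of the component of `a` in `G` minus the bridge. The only edge
of `G` along which `x` changes is `ab`, so `L x = e_a - e_b`. Since `L M L = L` and `L` is
symmetric, `(e_a - e_b) ⬝ M (e_a - e_b) = x ⬝ L M L x = x ⬝ L x = x_a - x_b = 1`; the left side
is `M_aa - 2 M_ab + M_bb` because, by uniqueness, the pseudoinverse of a symmetric matrix is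
symmetric.
-/

open Matrix BigOperators

/-- `M` is a Moore–Penrose pseudoinverse of `L`. -/
def IsMoorePenrose {n : Type*} [Fintype n] (L M : Matrix n n ℝ) : Prop :=
  L * M * L = L ∧ M * L * M = M ∧ (L * M)ᵀ = L * M ∧ (M * L)ᵀ = M * L

instance deleteEdgeAdjDecidable {V : Type*} [DecidableEq V]
    (G : SimpleGraph V) [DecidableRel G.Adj] (a b : V) :
    DecidableRel (G.deleteEdges {s(a, b)}).Adj := fun x y =>
  decidable_of_iff (G.Adj x y ∧ ¬s(x, y) = s(a, b)) (by simp)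

namespace IsMoorePenrose

variable {n : Type*} [Fintype n] {L M N : Matrix n n ℝ}

theorem unique (hM : IsMoorePenrose L M) (hN : IsMoorePenrose L N) : M = N := by
  obtain ⟨hM₁, hM₂, hM₃, hM₄⟩ := hM
  obtain ⟨hN₁, hN₂, hN₃, hN₄⟩ := hN
  have hM_eq : M = M * L * N :=
    calc M = M * (L * M)ᵀ := by rw [hM₃, ← Matrix.mul_assoc, hM₂]
    _ = M * Mᵀ * (L * N * L)ᵀ := by rw [hN₁, transpose_mul, Matrix.mul_assoc]
    _ = M * (L * M)ᵀ * (L * N)ᵀ := by simp only [transpose_mul, Matrix.mul_assoc]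
    _ = M * L * N := by rw [hM₃, hN₃, ← Matrix.mul_assoc M L M, hM₂, Matrix.mul_assoc]
  have hN_eq : N = M * L * N :=
    calc N = (N * L)ᵀ * N := by rw [hN₄, hN₂]
    _ = (L * M * L)ᵀ * Nᵀ * N := by rw [hM₁, transpose_mul]
    _ = (M * L)ᵀ * (N * L)ᵀ * N := by simp only [transpose_mul, Matrix.mul_assoc]
    _ = M * L * N := by rw [hM₄, hN₄, Matrix.mul_assoc, Matrix.mul_assoc, hN₂, Matrix.mul_assoc]
  rw [hM_eq, ← hN_eq]

theorem transpose (hM : IsMoorePenrose L M) : IsMoorePenrose Lᵀ Mᵀ := by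
  obtain ⟨h₁, h₂, h₃, h₄⟩ := hM
  refine ⟨?_, ?_, ?_, ?_⟩
  · rw [← transpose_mul, ← transpose_mul, ← Matrix.mul_assoc, h₁]
  · rw [← transpose_mul, ← transpose_mul, ← Matrix.mul_assoc, h₂]
  · rw [← transpose_mul, transpose_transpose, h₄]
  · rw [← transpose_mul, transpose_transpose, h₃]

theorem isSymm (hM : IsMoorePenrose L M) (hL : L.IsSymm) : M.IsSymm := by
  have := hM.transpose
  rw [hL.eq] at this
  exact this.unique hM

end IsMoorePenrose

theorem Matrix.dotProduct_mulVec_mulVec_of_mul_mul_eq {n R : Type*} [Fintype n] [CommRing R]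
    {L M : Matrix n n R} (hL : L.IsSymm) (h : L * M * L = L) (x : n → R) :
    (L *ᵥ x) ⬝ᵥ (M *ᵥ (L *ᵥ x)) = x ⬝ᵥ (L *ᵥ x) := by
  rw [dotProduct_comm, dotProduct_mulVec, ← mulVec_transpose, hL.eq, mulVec_mulVec, mulVec_mulVec,
    h, dotProduct_comm]

namespace SimpleGraph

variable {V R : Type*} [Fintype V] [DecidableEq V] [Ring R] {G : SimpleGraph V} [DecidableRel G.Adj]

theorem lapMatrix_mulVec_eq_of_deleteEdges_adj {a b : V} (hab : G.Adj a b) {x : V → R}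
    (hx : ∀ u v, (G.deleteEdges {s(a, b)}).Adj u v → x u = x v) :
    G.lapMatrix R *ᵥ x = (x a - x b) • (Pi.single a 1 - Pi.single b 1) := by
  have hterm : ∀ u w, G.Adj u w → s(u, w) ≠ s(a, b) → x u - x w = 0 := fun u w huw hne ↦
    sub_eq_zero.mpr (hx u w ((deleteEdges_adj ..).mpr ⟨huw, hne⟩))
  ext u
  rw [lapMatrix_mulVec_apply, ← card_neighborFinset_eq_degree, ← nsmul_eq_mul, ← Finset.sum_const,
    ← Finset.sum_sub_distrib, Pi.smul_apply, Pi.sub_apply, smul_eq_mul]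
  by_cases hua : u = a
  · subst hua
    rw [Finset.sum_eq_single b
      (fun w hw hwb ↦ hterm u w ((mem_neighborFinset ..).mp hw) (by simp [hwb, hab.ne]))
      (fun hb ↦ (hb ((mem_neighborFinset ..).mpr hab)).elim)]
    simp [hab.ne']
  by_cases hub : u = b
  · subst hub
    rw [Finset.sum_eq_single a
      (fun w hw hwa ↦ hterm u w ((mem_neighborFinset ..).mp hw) (by simp [hwa, hab.ne']))
      (fun ha ↦ (ha ((mem_neighborFinset ..).mpr hab.symm)).elim)]
    simp [hab.ne']
  rw [Finset.sum_eq_zero fun w hw ↦ hterm u w ((mem_neighborFinset ..).mp hw) (by simp [hua, hub])]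
  simp [hua, hub]

end SimpleGraph

theorem bridge_effective_resistance_eq_one {V : Type*} [Fintype V] [DecidableEq V]
    (G : SimpleGraph V) [DecidableRel G.Adj] (hG : G.Connected)
    (a b : V) (hab : G.Adj a b) (hbridge : ¬(G.deleteEdges {s(a, b)}).Connected)
    (M : Matrix V V ℝ) (hM : IsMoorePenrose (G.lapMatrix ℝ) M) :
    M a a - 2 * M a b + M b b = 1 := by
  have hnotReachable : ¬(G.deleteEdges {s(a, b)}).Reachable a b := SimpleGraph.isBridge_iff.mp <|
    by_contra fun h ↦ hbridge (hG.connected_delete_edge_of_not_isBridge h)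
  let x : V → ℝ := fun u ↦ if (G.deleteEdges {s(a, b)}).Reachable a u then 1 else 0
  have hx : ∀ u v, (G.deleteEdges {s(a, b)}).Adj u v → x u = x v := fun u v huv ↦ by
    have : (G.deleteEdges {s(a, b)}).Reachable a u ↔ (G.deleteEdges {s(a, b)}).Reachable a v :=
      ⟨fun h ↦ h.trans huv.reachable, fun h ↦ h.trans huv.reachable.symm⟩
    simp only [x, this]
  have hxab : x a - x b = 1 := by simp [x, hnotReachable]
  have key := dotProduct_mulVec_mulVec_of_mul_mul_eq (G.isSymm_lapMatrix ℝ) hM.1 x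
  rw [SimpleGraph.lapMatrix_mulVec_eq_of_deleteEdges_adj hab hx, hxab, one_smul] at key
  simp only [mulVec_sub, mulVec_single, MulOpposite.op_one, one_smul, dotProduct_sub,
    sub_dotProduct, single_dotProduct, col_apply, one_mul, dotProduct_single, mul_one, hxab] at key
  linarith [(hM.isSymm (G.isSymm_lapMatrix ℝ)).apply a b]
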